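/- Tensor-trick cohomology (δ₁-cohomology): let (H, Q) be a cochain complex of ℂ-vector spaces equipped with a Hodge–Kodaira decomposition QQ⁺ + Q⁺Q + P = 1, P² = P, QP = PQ = 0. On T(H) = ⊕_{n≥1} H^{⊗n} let δ₁ be the degree +1 derivation with δ₁(o_1⊗⋯⊗o_n) = Σ_{i=1}^n (−1)^{deg o_1+⋯+deg o_{i−1}} o_1⊗⋯⊗Q(o_i)⊗⋯⊗o_n, and define the degree −1 operator H* by H*(o_1⊗⋯⊗o_n) = Σ_{i=1}^n (−1)^{deg o_1+⋯+deg o_{i−1}} o_1⊗⋯⊗o_{i−1}⊗Q⁺(o_i)⊗P(o_{i+1})⊗⋯⊗P(o_n). Then δ₁ ∘ H* + H* ∘ δ₁ = Id − P^⊗, where P^⊗ restricted to H^{⊗n} is P⊗⋯⊗P; consequently the δ₁-cohomology of T(H) is ⊕_{n≥1} (H^p)^{⊗n} with H^p = PH. -/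

import Mathlib

namespace Kajiura

noncomputable section

variable {V : Type} [AddCommGroup V] [Module ℂ V]

/-- Koszul sign `(-1)^{d 0 + ⋯ + d (j-1)}`. -/
def sgn (d : ℕ → ℤ) (j : ℕ) : ℂ :=
  (-1 : ℂ) ^ (∑ i ∈ Finset.range j, d i)

/-- The `n`-th tensor power of `V`. -/
abbrev Tpow (V : Type) [AddCommGroup V] [Module ℂ V] (n : ℕ) : Type :=
  PiTensorProduct ℂ fun _ : Fin n => V

/-- The pure tensor `o_0 ⊗ ⋯ ⊗ o_{n-1}`. -/
def tp (n : ℕ) (o : ℕ → V) : Tpow V n :=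
  PiTensorProduct.tprod ℂ fun i : Fin n => o i.val

/-- One layer of the differential `δ₁` on a homogeneous pure tensor with degrees `d`:
`δ₁(o_1 ⊗ ⋯ ⊗ o_n) = Σ_i (-1)^{deg o_1 + ⋯ + deg o_{i-1}} o_1 ⊗ ⋯ ⊗ Q(o_i) ⊗ ⋯ ⊗ o_n`. -/
def delta1Layer (Q : V →ₗ[ℂ] V) (n : ℕ) (d : ℕ → ℤ) (o : ℕ → V) : Tpow V n :=
  ∑ i ∈ Finset.range n, sgn d i •
    (PiTensorProduct.tprod ℂ fun r : Fin n =>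
      if r.val = i then Q (o r.val) else o r.val)

/-- One layer of the homotopy `H*` on a homogeneous pure tensor with degrees `d`:
`H*(o_1 ⊗ ⋯ ⊗ o_n) = Σ_i (-1)^{deg o_1 + ⋯ + deg o_{i-1}}
  o_1 ⊗ ⋯ ⊗ o_{i-1} ⊗ Q⁺(o_i) ⊗ P(o_{i+1}) ⊗ ⋯ ⊗ P(o_n)`. -/
def hstarLayer (Qp P : V →ₗ[ℂ] V) (n : ℕ) (d : ℕ → ℤ) (o : ℕ → V) : Tpow V n :=
  ∑ i ∈ Finset.range n, sgn d i •
    (PiTensorProduct.tprod ℂ fun r : Fin n =>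
      if r.val < i then o r.val else if r.val = i then Qp (o r.val) else P (o r.val))

/-!
Expanding `δ₁ ∘ H* + H* ∘ δ₁` on a pure tensor gives a double sum over the slot `j` where `H*`
puts `Q⁺` and the slot `i` where `δ₁` puts `Q`. For `i < j` the two composites yield the same
tensor, with opposite Koszul signs because `Q` raised the degree of slot `i`; for `i > j` slot
`i` carries `Q P` or `P Q`, so the term vanishes. On the diagonal, `Q Q⁺ + Q⁺ Q = 1 - P` in slot
`j` turns the term into `F (j + 1) - F j`, where `F k` applies `P` from slot `k` on, and the sum
telescopes to `F n - F 0 = Id - P^⊗`.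
-/

lemma sgn_congr {d d' : ℕ → ℤ} {i : ℕ} (h : ∀ r < i, d r = d' r) : sgn d i = sgn d' i := by
  unfold sgn
  rw [Finset.sum_congr rfl fun r hr => h r (Finset.mem_range.mp hr)]

lemma sgn_ite_of_le (d e : ℕ → ℤ) {i j : ℕ} (h : i ≤ j) :
    sgn (fun r => if r = j then e r else d r) i = sgn d i :=
  sgn_congr fun r hr => if_neg (by omega)

lemma sgn_add_one_of_lt (d : ℕ → ℤ) {i j : ℕ} (h : i < j) :
    sgn (fun r => if r = i then d r + 1 else d r) j = -sgn d j := by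
  have hsum : ∑ r ∈ Finset.range j, (if r = i then d r + 1 else d r)
      = ∑ r ∈ Finset.range j, d r + 1 := calc
    _ = ∑ r ∈ Finset.range j, (d r + if r = i then 1 else 0) :=
      Finset.sum_congr rfl fun r _ => by split_ifs <;> simp
    _ = _ := by rw [Finset.sum_add_distrib, Finset.sum_ite_eq', if_pos (Finset.mem_range.mpr h)]
  rw [sgn, hsum, zpow_add_one₀ (by norm_num), sgn, mul_neg_one]

lemma sgn_mul_self (d : ℕ → ℤ) (j : ℕ) : sgn d j * sgn d j = 1 := by
  rw [sgn, ← mul_zpow]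
  norm_num

lemma tp_congr {n : ℕ} {f g : ℕ → V} (h : ∀ r < n, f r = g r) : tp n f = tp n g :=
  congrArg (PiTensorProduct.tprod ℂ) (funext fun r : Fin n => h r r.isLt)

lemma tp_eq_zero_of_apply_eq_zero {n k : ℕ} {f : ℕ → V} (hk : k < n) (h : f k = 0) :
    tp n f = 0 :=
  MultilinearMap.map_coord_zero _ (⟨k, hk⟩ : Fin n) h

lemma tp_update {n j : ℕ} (hj : j < n) (f : ℕ → V) (x : V) :
    tp n (Function.update f j x)
      = (PiTensorProduct.tprod ℂ).toLinearMap (fun r : Fin n => f r) ⟨j, hj⟩ x := by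
  rw [MultilinearMap.toLinearMap_apply, tp]
  exact congrArg _ (Function.update_comp_eq_of_injective f Fin.val_injective ⟨j, hj⟩ x)

def deltaTerm (Q : V →ₗ[ℂ] V) (i : ℕ) (o : ℕ → V) : ℕ → V :=
  fun r => if r = i then Q (o r) else o r

def hstarTerm (Qp P : V →ₗ[ℂ] V) (j : ℕ) (o : ℕ → V) : ℕ → V :=
  fun r => if r < j then o r else if r = j then Qp (o r) else P (o r)

def mapFrom (P : V →ₗ[ℂ] V) (k : ℕ) (o : ℕ → V) : ℕ → V :=
  fun r => if r < k then o r else P (o r)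

lemma tp_mapFrom_self (P : V →ₗ[ℂ] V) (n : ℕ) (o : ℕ → V) : tp n (mapFrom P n o) = tp n o :=
  tp_congr fun _ hr => if_pos hr

section Anticommutator

variable (Q Qp P : V →ₗ[ℂ] V) (n : ℕ) (d : ℕ → ℤ) (o : ℕ → V)

/-- The contribution of the slot pair `(j, i)` to `δ₁ ∘ H* + H* ∘ δ₁`. -/
def anticommTerm (j i : ℕ) : Tpow V n :=
  (sgn d j * sgn (fun r => if r = j then d r - 1 else d r) i) •
      tp n (deltaTerm Q i (hstarTerm Qp P j o))
    + (sgn d i * sgn (fun r => if r = i then d r + 1 else d r) j) •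
      tp n (hstarTerm Qp P j (deltaTerm Q i o))

lemma sum_delta1Layer_add_sum_hstarLayer :
    (∑ j ∈ Finset.range n, sgn d j •
        delta1Layer Q n (fun r => if r = j then d r - 1 else d r) (hstarTerm Qp P j o))
      + ∑ i ∈ Finset.range n, sgn d i •
        hstarLayer Qp P n (fun r => if r = i then d r + 1 else d r) (deltaTerm Q i o)
      = ∑ j ∈ Finset.range n, ∑ i ∈ Finset.range n, anticommTerm Q Qp P n d o j i := by
  simp only [anticommTerm, Finset.sum_add_distrib, delta1Layer, hstarLayer, Finset.smul_sum,
    smul_smul]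
  rw [Finset.sum_comm (s := Finset.range n) (t := Finset.range n)
    (f := fun i j => (sgn d i * sgn (fun r => if r = i then d r + 1 else d r) j) • _)]
  rfl

lemma anticommTerm_of_lt {j i : ℕ} (h : i < j) : anticommTerm Q Qp P n d o j i = 0 := by
  have hterm : deltaTerm Q i (hstarTerm Qp P j o) = hstarTerm Qp P j (deltaTerm Q i o) := by
    funext r
    simp only [deltaTerm, hstarTerm]
    split_ifs <;> first | rfl | omega
  rw [anticommTerm, hterm, sgn_ite_of_le d _ h.le, sgn_add_one_of_lt d h, mul_comm (sgn d i),
    neg_mul, neg_smul, add_neg_cancel]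

variable {Q Qp P} in
lemma anticommTerm_of_gt (hQP : ∀ v, Q (P v) = 0) (hPQ : ∀ v, P (Q v) = 0) {j i : ℕ}
    (hi : i < n) (h : j < i) : anticommTerm Q Qp P n d o j i = 0 := by
  have hδH : tp n (deltaTerm Q i (hstarTerm Qp P j o)) = 0 :=
    tp_eq_zero_of_apply_eq_zero hi <| by
      simp only [deltaTerm, hstarTerm, if_neg (show ¬i < j by omega),
        if_neg (show i ≠ j by omega), ↓reduceIte, hQP]
  have hHδ : tp n (hstarTerm Qp P j (deltaTerm Q i o)) = 0 :=
    tp_eq_zero_of_apply_eq_zero hi <| by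
      simp only [deltaTerm, hstarTerm, if_neg (show ¬i < j by omega),
        if_neg (show i ≠ j by omega), ↓reduceIte, hPQ]
  rw [anticommTerm, hδH, hHδ, smul_zero, smul_zero, add_zero]

variable {Q Qp P} in
lemma anticommTerm_self (hHK : ∀ v, Q (Qp v) + Qp (Q v) + P v = v) {j : ℕ} (hj : j < n) :
    anticommTerm Q Qp P n d o j j = tp n (mapFrom P (j + 1) o) - tp n (mapFrom P j o) := by
  set m := mapFrom P j o
  have hδH : deltaTerm Q j (hstarTerm Qp P j o) = Function.update m j (Q (Qp (o j))) := by
    funext r; simp only [deltaTerm, hstarTerm, m, mapFrom, Function.update_apply]; grind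
  have hHδ : hstarTerm Qp P j (deltaTerm Q j o) = Function.update m j (Qp (Q (o j))) := by
    funext r; simp only [deltaTerm, hstarTerm, m, mapFrom, Function.update_apply]; grind
  have hsucc : mapFrom P (j + 1) o = Function.update m j (o j) := by
    funext r; simp only [m, mapFrom, Function.update_apply]; grind
  have hself : tp n m = tp n (Function.update m j (P (o j))) :=
    congrArg (tp n) (Function.update_eq_self_iff.mpr (if_neg (lt_irrefl j)).symm).symm
  rw [anticommTerm, sgn_ite_of_le d _ le_rfl, sgn_ite_of_le d _ le_rfl, sgn_mul_self, one_smul,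
    one_smul, hδH, hHδ, hsucc, tp_update hj, tp_update hj, tp_update hj, hself, tp_update hj,
    ← map_add, ← map_sub, ← eq_sub_of_add_eq (hHK (o j))]

end Anticommutator

theorem tensor_trick_cohomology_general
    (gr : ℤ → Submodule ℂ V)
    (Q Qp P : V →ₗ[ℂ] V)
    (hHK : ∀ v, Q (Qp v) + Qp (Q v) + P v = v)
    (hQP : ∀ v, Q (P v) = 0)
    (hPQ : ∀ v, P (Q v) = 0) :
    ∀ (n : ℕ), 1 ≤ n → ∀ (d : ℕ → ℤ) (o : ℕ → V), (∀ i, i < n → o i ∈ gr (d i)) →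
      ((∑ j ∈ Finset.range n, sgn d j •
          delta1Layer Q n (fun r => if r = j then d r - 1 else d r)
            (fun r => if r < j then o r else if r = j then Qp (o r) else P (o r)))
        + ∑ i ∈ Finset.range n, sgn d i •
            hstarLayer Qp P n (fun r => if r = i then d r + 1 else d r)
              (fun r => if r = i then Q (o r) else o r))
      = tp n o - tp n fun r => P (o r) := by
  intro n _ d o _
  calc _ = ∑ j ∈ Finset.range n, ∑ i ∈ Finset.range n, anticommTerm Q Qp P n d o j i :=
        sum_delta1Layer_add_sum_hstarLayer Q Qp P n d o
    _ = ∑ j ∈ Finset.range n, (tp n (mapFrom P (j + 1) o) - tp n (mapFrom P j o)) := by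
        refine Finset.sum_congr rfl fun j hj => ?_
        rw [Finset.sum_eq_single_of_mem j hj fun i hi hij => ?_,
          anticommTerm_self n d o hHK (Finset.mem_range.mp hj)]
        rcases hij.lt_or_gt with h | h
        · exact anticommTerm_of_lt Q Qp P n d o h
        · exact anticommTerm_of_gt n d o hQP hPQ (Finset.mem_range.mp hi) h
    _ = tp n o - tp n fun r => P (o r) := by
        rw [Finset.sum_range_sub (fun k => tp n (mapFrom P k o)), tp_mapFrom_self]
        rfl

/-- **Tensor-trick cohomology (`δ₁`-cohomology).**
Given a Hodge–Kodaira decomposition `Q Q⁺ + Q⁺ Q + P = 1` of a cochain complex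
`(H, Q)` of ℂ-vector spaces, the operators `δ₁` and `H*` on `T(H) = ⊕_{n ≥ 1} H^{⊗n}`
satisfy `δ₁ ∘ H* + H* ∘ δ₁ = Id − P^⊗` on homogeneous pure tensors (the composites
being expanded through the homogeneous terms of `H*(o)`, resp. `δ₁(o)`); consequently
the `δ₁`-cohomology of `T(H)` is `⊕_{n ≥ 1} (H^p)^{⊗n}` with `H^p = P H`. -/
theorem tensor_trick_cohomology
    (gr : ℤ → Submodule ℂ V) (hgr : DirectSum.IsInternal gr)
    (Q Qp P : V →ₗ[ℂ] V)
    (hQdeg : ∀ (d : ℤ) (v : V), v ∈ gr d → Q v ∈ gr (d + 1))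
    (hQpdeg : ∀ (d : ℤ) (v : V), v ∈ gr d → Qp v ∈ gr (d - 1))
    (hQ2 : ∀ v, Q (Q v) = 0)
    (hHK : ∀ v, Q (Qp v) + Qp (Q v) + P v = v)
    (hP2 : ∀ v, P (P v) = P v)
    (hQP : ∀ v, Q (P v) = 0)
    (hPQ : ∀ v, P (Q v) = 0) :
    ∀ (n : ℕ), 1 ≤ n → ∀ (d : ℕ → ℤ) (o : ℕ → V), (∀ i, i < n → o i ∈ gr (d i)) →
      ((∑ j ∈ Finset.range n, sgn d j •
          delta1Layer Q n (fun r => if r = j then d r - 1 else d r)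
            (fun r => if r < j then o r else if r = j then Qp (o r) else P (o r)))
        + ∑ i ∈ Finset.range n, sgn d i •
            hstarLayer Qp P n (fun r => if r = i then d r + 1 else d r)
              (fun r => if r = i then Q (o r) else o r))
      = tp n o - tp n fun r => P (o r) :=
  tensor_trick_cohomology_general gr Q Qp P hHK hQP hPQ

end
end Kajiura
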